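/- Let u ∈ ℝ be fixed, σ > 0, α ∈ (0,2). For d ∈ (0,1) set a = σ d^{α/2}, z₁ = 1, z₂ = e^{a u}, and let f_d be the bivariate Brown-Resnick density with exponent V_d(z₁,z₂) = (1/z₁)Φ(a/2 + u) + (1/z₂)Φ(a/2 − u), viewed as a function of α. Then lim_{d→0} (1/log d) · ∂/∂α log f_d(z₁,z₂;α) = (u² − 1)/2. -/

import Mathlib

/-!
With `z₁ = 1`, `z₂ = e^L`, `w = a/2 + L/a` and `v = a/2 - L/a`, differentiating `exp (-V)` twice
gives `f = e^{-V} (Φ(w) Φ(v) + φ(v)/a) / z₂²`, the cross terms cancelling because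
`φ(v) = φ(w) e^L`. As `∂_α a = a log d / 2`, the normalized score is `(a/2) ∂_a log f`, and for
`L = a u` this is an explicit expression in `a`, `w = a/2 + u`, `v = a/2 - u` that is continuous
at `a = 0`. There only the term `-φ(v) (v w + 1) / φ(v)` survives, giving `u² - 1`.
-/

open Real Set Filter

/-- The standard Gaussian cumulative distribution function. -/
noncomputable def Phi (x : ℝ) : ℝ :=
  ∫ t in Set.Iic x, Real.exp (-t ^ 2 / 2) / Real.sqrt (2 * Real.pi)

/-- The bivariate Brown-Resnick exponent function with `a = σ d^{α/2}`. -/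
noncomputable def Vpair (a z₁ z₂ : ℝ) : ℝ :=
  (1 / z₁) * Phi (a / 2 + Real.log (z₂ / z₁) / a)
    + (1 / z₂) * Phi (a / 2 - Real.log (z₂ / z₁) / a)

/-- The bivariate Brown-Resnick density `f = ∂²/∂z₁∂z₂ exp (-V)`. -/
noncomputable def fpair (a z₁ z₂ : ℝ) : ℝ :=
  deriv (fun t₁ => deriv (fun t₂ => Real.exp (-(Vpair a t₁ t₂))) z₂) z₁

open Topology MeasureTheory

noncomputable def phi (x : ℝ) : ℝ := exp (-x ^ 2 / 2) / sqrt (2 * π)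

lemma phi_pos (x : ℝ) : 0 < phi x := by
  unfold phi; positivity

lemma phi_neg (x : ℝ) : phi (-x) = phi x := by
  simp only [phi, even_two.neg_pow]

@[fun_prop]
lemma continuous_phi : Continuous phi := by
  unfold phi; fun_prop

lemma integrable_phi : Integrable phi := by
  have h : phi = fun x => exp (-(1 / 2) * x ^ 2) * (sqrt (2 * π))⁻¹ := by
    funext x; rw [phi, div_eq_mul_inv]; ring_nf
  rw [h]
  exact (integrable_exp_neg_mul_sq (by norm_num)).mul_const _

lemma hasDerivAt_phi (x : ℝ) : HasDerivAt phi (-x * phi x) x := by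
  have h := ((((hasDerivAt_pow 2 x).fun_neg).div_const 2).exp).div_const (sqrt (2 * π))
  refine h.congr_deriv ?_
  rw [phi]
  ring

/-- `(a/2 + L/a)² - (a/2 - L/a)² = 2L`: the identity behind every cancellation in the
derivatives of `Vpair`. -/
lemma phi_sub_eq {a : ℝ} (L : ℝ) (ha : a ≠ 0) :
    phi (a / 2 - L / a) = phi (a / 2 + L / a) * exp L := by
  rw [phi, phi, div_mul_eq_mul_div, ← exp_add]
  congr 2
  field_simp
  ring

lemma Phi_eq_add_integral (x : ℝ) : Phi x = Phi 0 + ∫ t in (0 : ℝ)..x, phi t := by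
  have h := intervalIntegral.integral_Iic_sub_Iic (μ := volume) (a := 0) (b := x)
    integrable_phi.integrableOn integrable_phi.integrableOn
  simp only [Phi, phi] at h ⊢
  linarith

lemma hasDerivAt_Phi (x : ℝ) : HasDerivAt Phi (phi x) x := by
  have h := intervalIntegral.integral_hasDerivAt_right (a := 0) (b := x)
    integrable_phi.intervalIntegrable continuous_phi.aestronglyMeasurable.stronglyMeasurableAtFilter continuous_phi.continuousAt
  exact (h.const_add (Phi 0)).congr_of_eventuallyEq
    (Eventually.of_forall fun y => Phi_eq_add_integral y)

@[fun_prop]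
lemma continuous_Phi : Continuous Phi :=
  continuous_iff_continuousAt.2 fun x => (hasDerivAt_Phi x).continuousAt

lemma Phi_pos (x : ℝ) : 0 < Phi x := by
  have hpos : 0 < ∫ t in Ioc (x - 1) x, phi t := by
    rw [← intervalIntegral.integral_of_le (by linarith)]
    exact intervalIntegral.intervalIntegral_pos_of_pos integrable_phi.intervalIntegrable
      phi_pos (by linarith)
  have hle : ∫ t in Ioc (x - 1) x, phi t ≤ ∫ t in Iic x, phi t :=
    setIntegral_mono_set integrable_phi.integrableOn
      (Eventually.of_forall fun t => (phi_pos t).le) Ioc_subset_Iic_self.eventuallyLE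
  exact hpos.trans_le hle

lemma Vpair_comm (a t₁ t₂ : ℝ) : Vpair a t₁ t₂ = Vpair a t₂ t₁ := by
  simp only [Vpair, ← inv_div t₂ t₁, log_inv, neg_div, sub_neg_eq_add, ← sub_eq_add_neg]
  rw [add_comm]

lemma hasDerivAt_Vpair_right {a t₁ t₂ : ℝ} (ha : a ≠ 0) (h₁ : 0 < t₁) (h₂ : 0 < t₂) :
    HasDerivAt (fun t => Vpair a t₁ t) (-Phi (a / 2 - log (t₂ / t₁) / a) / t₂ ^ 2) t₂ := by
  have hL : HasDerivAt (fun t => log (t / t₁) / a) (1 / (a * t₂)) t₂ := by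
    have h := (((hasDerivAt_id t₂).div_const t₁).log (div_pos h₂ h₁).ne').div_const a
    refine h.congr_deriv ?_
    simp only [id]
    field_simp
  have hw := (hasDerivAt_Phi _).comp t₂ (hL.const_add (a / 2))
  have hv := (hasDerivAt_Phi _).comp t₂ (hL.const_sub (a / 2))
  have h := (hw.const_mul (1 / t₁)).fun_add ((hasDerivAt_inv h₂.ne').fun_mul hv)
  have hphi :
      phi (a / 2 - log (t₂ / t₁) / a) = phi (a / 2 + log (t₂ / t₁) / a) * (t₂ / t₁) := by
    rw [phi_sub_eq _ ha, exp_log (div_pos h₂ h₁)]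
  rw [show (fun t => Vpair a t₁ t) = fun t => 1 / t₁ * Phi (a / 2 + log (t / t₁) / a)
      + t⁻¹ * Phi (a / 2 - log (t / t₁) / a) from funext fun t => by rw [Vpair, one_div t]]
  refine h.congr_deriv ?_
  simp only [Function.comp_apply, hphi]
  field_simp
  ring

lemma hasDerivAt_Vpair_left {a t₁ t₂ : ℝ} (ha : a ≠ 0) (h₁ : 0 < t₁) (h₂ : 0 < t₂) :
    HasDerivAt (fun t => Vpair a t t₂) (-Phi (a / 2 + log (t₂ / t₁) / a) / t₁ ^ 2) t₁ := by
  convert hasDerivAt_Vpair_right ha h₂ h₁ using 1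
  · funext t
    exact Vpair_comm a t t₂
  · simp only [← inv_div t₂ t₁, log_inv, neg_div, sub_neg_eq_add]

lemma fpair_eq {a z₁ z₂ : ℝ} (ha : a ≠ 0) (h₁ : 0 < z₁) (h₂ : 0 < z₂) :
    fpair a z₁ z₂ = exp (-Vpair a z₁ z₂) *
      (Phi (a / 2 + log (z₂ / z₁) / a) * Phi (a / 2 - log (z₂ / z₁) / a) / z₁ ^ 2
        + phi (a / 2 - log (z₂ / z₁) / a) / (a * z₁)) / z₂ ^ 2 := by
  have hinner : (fun t => deriv (fun s => exp (-Vpair a t s)) z₂) =ᶠ[𝓝 z₁]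
      fun t => exp (-Vpair a t z₂) * Phi (a / 2 - log (z₂ / t) / a) / z₂ ^ 2 := by
    filter_upwards [eventually_gt_nhds h₁] with t ht
    refine ((hasDerivAt_Vpair_right ha ht h₂).fun_neg.exp).deriv.trans ?_
    ring
  have hv : HasDerivAt (fun t => a / 2 - log (z₂ / t) / a) (1 / (a * z₁)) z₁ := by
    have h := ((((hasDerivAt_const z₁ z₂).div (hasDerivAt_id z₁) h₁.ne').log
      (div_pos h₂ h₁).ne').div_const a).const_sub (a / 2)
    refine h.congr_deriv ?_
    simp only [id, Pi.div_apply]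
    field_simp
    ring
  have h := (((hasDerivAt_Vpair_left ha h₁ h₂).fun_neg.exp).fun_mul
    ((hasDerivAt_Phi _).comp z₁ hv)).div_const (z₂ ^ 2)
  rw [fpair, hinner.deriv_eq]
  refine h.deriv.trans ?_
  simp only [Function.comp_apply]
  field_simp

lemma hasDerivAt_half_add_div {a : ℝ} (L : ℝ) (ha : a ≠ 0) :
    HasDerivAt (fun b => b / 2 + L / b) ((a / 2 - L / a) / a) a := by
  have h := ((hasDerivAt_id a).div_const 2).fun_add ((hasDerivAt_inv ha).const_mul L)
  refine h.congr_deriv ?_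
  field_simp
  ring

lemma hasDerivAt_half_sub_div {a : ℝ} (L : ℝ) (ha : a ≠ 0) :
    HasDerivAt (fun b => b / 2 - L / b) ((a / 2 + L / a) / a) a := by
  have h := ((hasDerivAt_id a).div_const 2).fun_sub ((hasDerivAt_inv ha).const_mul L)
  refine h.congr_deriv ?_
  field_simp
  ring

lemma Vpair_one_exp (a L : ℝ) :
    Vpair a 1 (exp L) = Phi (a / 2 + L / a) + Phi (a / 2 - L / a) / exp L := by
  simp only [Vpair, div_one, log_exp]
  ring

lemma hasDerivAt_Vpair_one_exp {a : ℝ} (L : ℝ) (ha : a ≠ 0) :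
    HasDerivAt (fun b => Vpair b 1 (exp L)) (phi (a / 2 + L / a)) a := by
  simp only [Vpair_one_exp]
  have h := ((hasDerivAt_Phi _).comp a (hasDerivAt_half_add_div L ha)).fun_add
    (((hasDerivAt_Phi _).comp a (hasDerivAt_half_sub_div L ha)).div_const (exp L))
  refine h.congr_deriv ?_
  rw [phi_sub_eq L ha]
  field_simp
  ring

/-- `(1 / log d) ∂_α log f_d` in terms of `a = σ d^{α/2}`, `w = a/2 + u` and `v = a/2 - u`. -/
noncomputable def normalizedScore (a w v : ℝ) : ℝ :=
  (-a * phi w + (a * (phi w * v * Phi v + Phi w * phi v * w) - phi v * (v * w + 1))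
    / (a * Phi w * Phi v + phi v)) / 2

lemma Phi_mul_Phi_add_phi_div_pos {a : ℝ} (ha : 0 < a) (w v : ℝ) :
    0 < Phi w * Phi v + phi v / a :=
  add_pos (mul_pos (Phi_pos w) (Phi_pos v)) (div_pos (phi_pos v) ha)

lemma log_fpair_one_exp {a : ℝ} (L : ℝ) (ha : 0 < a) :
    log (fpair a 1 (exp L)) = -Vpair a 1 (exp L)
      + log (Phi (a / 2 + L / a) * Phi (a / 2 - L / a) + phi (a / 2 - L / a) / a) - 2 * L := by
  have hN := Phi_mul_Phi_add_phi_div_pos ha (a / 2 + L / a) (a / 2 - L / a)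
  rw [fpair_eq ha.ne' one_pos (exp_pos L)]
  simp only [div_one, log_exp, one_pow, mul_one]
  rw [log_div (by positivity) (by positivity), log_mul (by positivity) hN.ne', log_exp, log_pow,
    log_exp]
  push_cast
  ring

lemma hasDerivAt_log_fpair_one_exp {a : ℝ} (L : ℝ) (ha : 0 < a) :
    HasDerivAt (fun b => log (fpair b 1 (exp L)))
      (2 * normalizedScore a (a / 2 + L / a) (a / 2 - L / a) / a) a := by
  have hw := hasDerivAt_half_add_div L ha.ne'
  have hv := hasDerivAt_half_sub_div L ha.ne'
  have hN := (((hasDerivAt_Phi _).comp a hw).fun_mul ((hasDerivAt_Phi _).comp a hv)).fun_add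
    (((hasDerivAt_phi _).comp a hv).fun_div (hasDerivAt_id a) ha.ne')
  have h := ((hasDerivAt_Vpair_one_exp L ha.ne').fun_neg.fun_add
    (hN.log (Phi_mul_Phi_add_phi_div_pos ha _ _).ne')).sub_const (2 * L)
  refine (h.congr_of_eventuallyEq ?_).congr_deriv ?_
  · filter_upwards [eventually_gt_nhds ha] with b hb
    exact log_fpair_one_exp L hb
  · simp only [Function.comp_apply, id, normalizedScore]
    field_simp
    ring

lemma deriv_log_fpair_div_log {σ α u d : ℝ} (hσ : 0 < σ) (hd : d ∈ Ioo 0 1) :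
    deriv (fun β => log (fpair (σ * d ^ (β / 2)) 1 (exp (σ * d ^ (α / 2) * u)))) α / log d
      = normalizedScore (σ * d ^ (α / 2)) (σ * d ^ (α / 2) / 2 + u)
          (σ * d ^ (α / 2) / 2 - u) := by
  set a := σ * d ^ (α / 2) with ha_def
  have ha : 0 < a := mul_pos hσ (rpow_pos_of_pos hd.1 _)
  have hlog : log d ≠ 0 := (log_neg hd.1 hd.2).ne
  have hscale : HasDerivAt (fun β => σ * d ^ (β / 2)) (a * log d / 2) α := by
    refine (((hasDerivAt_id α).div_const 2).const_rpow hd.1).const_mul σ |>.congr_deriv ?_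
    simp only [id, ha_def]
    ring
  have h := (hasDerivAt_log_fpair_one_exp (a * u) ha).comp α hscale
  rw [Function.comp_def] at h
  rw [h.deriv, mul_div_cancel_left₀ u ha.ne']
  field_simp

lemma tendsto_normalizedScore (u : ℝ) :
    Tendsto (fun a => normalizedScore a (a / 2 + u) (a / 2 - u)) (𝓝 0)
      (𝓝 ((u ^ 2 - 1) / 2)) := by
  have hden : (0 : ℝ) * Phi (0 / 2 + u) * Phi (0 / 2 - u) + phi (0 / 2 - u) ≠ 0 := by
    simpa using (phi_pos (-u)).ne'
  have hcont : ContinuousAt (fun a => normalizedScore a (a / 2 + u) (a / 2 - u)) 0 := by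
    unfold normalizedScore
    fun_prop (disch := exact hden)
  have hval : normalizedScore 0 (0 / 2 + u) (0 / 2 - u) = (u ^ 2 - 1) / 2 := by
    have hφ := (phi_pos u).ne'
    simp only [normalizedScore, phi_neg, zero_div, zero_add, zero_sub, zero_mul, neg_zero]
    field_simp
    ring
  simpa only [hval] using hcont.tendsto

/-- with `z₁ = 1`, `z₂ = e^{σ d^{α/2} u}` held so that the normalized
increment equals `u`, the pairwise score in `α` satisfies
`(1/log d) ∂/∂α log f_d(z₁,z₂;α) → (u² - 1)/2` as `d → 0⁺`, `d ∈ (0,1)`. -/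
theorem pairwise_score_alpha_limit (u σ α : ℝ) (hσ : 0 < σ) (hα : α ∈ Set.Ioo (0:ℝ) 2) :
    Filter.Tendsto
      (fun d : ℝ =>
        (deriv (fun β : ℝ =>
          Real.log (fpair (σ * d ^ (β / 2)) 1 (Real.exp (σ * d ^ (α / 2) * u)))) α)
          / Real.log d)
      (nhdsWithin 0 (Set.Ioo 0 1)) (nhds ((u ^ 2 - 1) / 2)) := by
  have ha : Tendsto (fun d : ℝ => σ * d ^ (α / 2)) (𝓝[Ioo 0 1] 0) (𝓝 0) := by
    have hα₀ : 0 < α / 2 := by linarith [hα.1]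
    have h := ((continuousAt_rpow_const 0 (α / 2) (Or.inr hα₀.le)).const_mul σ).tendsto
    rw [zero_rpow hα₀.ne', mul_zero] at h
    exact h.mono_left nhdsWithin_le_nhds
  refine ((tendsto_normalizedScore u).comp ha).congr' ?_
  filter_upwards [self_mem_nhdsWithin] with d hd
  exact (deriv_log_fpair_div_log hσ hd).symm
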